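/- arXiv:2111.02334 — 2 statements merged into one kernel-verified Lean document; each statement's English description precedes it below -/
import Mathlib

section
/- Under a completely randomized design with three groups, the expected value of the variance estimator V̂ = s1²/N1 + s2²/N2 + s3²/N3 (where s_k² is the sample variance of observed outcomes in group k) is at least the true variance of τ̂; specifically E[V̂] − V[τ̂] = S_τ²/N ≥ 0, so the Neyman-type variance estimator is conservative. -/
/-!
Averaging over a completely randomized design is invariant under permutations of the units, so a
unit falls in group `k` with probability `n k / N`, and two distinct units fall in groups `k, l`
with probability `n k (n l - δ_kl) / (N (N - 1))`. Hence the covariance of the group sums of `g`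
and `h` is `n k (δ_kl N - n l) / (N - 1) · cov(g, h)`. For `k = l` this gives `E s_k² = S_k²`,
and by bilinearity the contrast `τ̂ = ∑ c_k ȳ_k` has variance
`∑ c_k² S_k² / n_k - S²(∑ c_k Y_k) / N`, whose first part is exactly the expectation of the
Neyman estimator `∑ c_k² s_k² / n_k`.
-/

open Finset
open scoped BigOperators

section UniformCovariance

variable {ι κ : Type*}

noncomputable def uniformCov (s : Finset ι) (f g : ι → ℝ) : ℝ :=
  𝔼 i ∈ s, f i * g i - (𝔼 i ∈ s, f i) * 𝔼 i ∈ s, g i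

noncomputable def sampleVariance (s : Finset ι) (f : ι → ℝ) : ℝ :=
  (∑ i ∈ s, (f i - (∑ j ∈ s, f j) / #s) ^ 2) / (#s - 1)

lemma expect_sub_expect_sq {s : Finset ι} (hs : s.Nonempty) (f : ι → ℝ) :
    𝔼 i ∈ s, (f i - 𝔼 j ∈ s, f j) ^ 2 = uniformCov s f f := by
  simp_rw [sub_sq, expect_add_distrib, expect_sub_distrib, expect_const hs, mul_assoc,
    ← mul_expect, ← expect_mul, uniformCov, sq]
  ring

lemma uniformCov_sum_sum (s : Finset ι) (t : Finset κ) (a b : κ → ℝ) (x y : κ → ι → ℝ) :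
    uniformCov s (fun i => ∑ k ∈ t, a k * x k i) (fun i => ∑ l ∈ t, b l * y l i)
      = ∑ k ∈ t, ∑ l ∈ t, a k * b l * uniformCov s (x k) (y l) := by
  simp_rw [uniformCov, mul_sub, sum_sub_distrib, sum_mul_sum, expect_sum_comm, ← mul_expect]
  congr 1
  · exact sum_congr rfl fun k _ => sum_congr rfl fun l _ => by
      rw [mul_expect]; exact expect_congr rfl fun i _ => by ring
  · rw [sum_mul_sum]
    exact sum_congr rfl fun k _ => sum_congr rfl fun l _ => by ring

lemma sampleVariance_eq_mul_uniformCov (s : Finset ι) (f : ι → ℝ) :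
    sampleVariance s f = #s / (#s - 1) * uniformCov s f f := by
  rcases s.eq_empty_or_nonempty with rfl | hs
  · simp [sampleVariance, uniformCov]
  rw [sampleVariance, ← expect_eq_sum_div_card, ← expect_sub_expect_sq hs,
    expect_eq_sum_div_card s, ← card_smul_expect]
  ring

lemma sampleVariance_nonneg (s : Finset ι) (f : ι → ℝ) : 0 ≤ sampleVariance s f := by
  rcases s.eq_empty_or_nonempty with rfl | hs
  · simp [sampleVariance]
  exact div_nonneg (sum_nonneg fun i _ => sq_nonneg _)
    (sub_nonneg.2 (by exact_mod_cast hs.card_pos))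

end UniformCovariance

namespace CompletelyRandomizedDesign

variable {K : Type*} [Fintype K] [DecidableEq K]

def completeRandomization (α : Type*) [Fintype α] [DecidableEq α] (n : K → ℕ) : Finset (α → K) :=
  {ξ | ∀ k, #{i | ξ i = k} = n k}

variable {α : Type*} [Fintype α] [DecidableEq α] {n : K → ℕ}

lemma comp_perm_mem_completeRandomization {ξ : α → K} (hξ : ξ ∈ completeRandomization α n)
    (σ : Equiv.Perm α) : ξ ∘ σ ∈ completeRandomization α n := by
  simp only [completeRandomization, mem_filter, mem_univ, true_and, Function.comp_apply] at hξ ⊢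
  intro k
  rw [← hξ k]
  exact card_equiv σ (by simp)

lemma expect_comp_perm (f : (α → K) → ℝ) (σ : Equiv.Perm α) :
    𝔼 ξ ∈ completeRandomization α n, f (ξ ∘ σ) = 𝔼 ξ ∈ completeRandomization α n, f ξ :=
  expect_nbij' (· ∘ σ) (· ∘ σ.symm) (fun _ hξ => comp_perm_mem_completeRandomization hξ σ)
    (fun _ hξ => comp_perm_mem_completeRandomization hξ σ.symm)
    (fun _ _ => by ext; simp) (fun _ _ => by ext; simp) (fun _ _ => rfl)

lemma completeRandomization_nonempty (hn : ∑ k, n k = Fintype.card α) :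
    (completeRandomization α n).Nonempty := by
  let e : α ≃ Σ k, Fin (n k) := Fintype.equivOfCardEq (by simp [hn])
  refine ⟨fun i => (e i).1, mem_filter.2 ⟨mem_univ _, fun k => ?_⟩⟩
  rw [← Fintype.card_subtype]
  exact (Fintype.card_congr ((e.subtypeEquiv (q := fun x => x.1 = k) fun _ => Iff.rfl).trans
    (Equiv.sigmaSubtype k))).trans (Fintype.card_fin _)

lemma card_fiber_of_mem {ξ : α → K} (hξ : ξ ∈ completeRandomization α n) (k : K) :
    #{i | ξ i = k} = n k :=
  (mem_filter.1 hξ).2 k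

lemma expect_ite_apply_eq (hS : (completeRandomization α n).Nonempty) (i : α) (k : K) :
    𝔼 ξ ∈ completeRandomization α n, (if ξ i = k then (1 : ℝ) else 0) = n k / Fintype.card α := by
  have hconst (j : α) : 𝔼 ξ ∈ completeRandomization α n, (if ξ j = k then (1 : ℝ) else 0)
      = 𝔼 ξ ∈ completeRandomization α n, (if ξ i = k then (1 : ℝ) else 0) := by
    simpa using expect_comp_perm (n := n) (fun ξ => if ξ i = k then (1 : ℝ) else 0)
      (Equiv.swap i j)
  have hsum : ∑ j, 𝔼 ξ ∈ completeRandomization α n, (if ξ j = k then (1 : ℝ) else 0) = n k := by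
    rw [← expect_sum_comm, expect_congr rfl (g := fun _ => (n k : ℝ)), expect_const hS]
    intro ξ hξ
    rw [sum_boole, card_fiber_of_mem hξ]
  simp only [hconst, sum_const, card_univ, nsmul_eq_mul] at hsum
  rw [← hsum, mul_div_cancel_left₀ _ (Nat.cast_ne_zero.2 (Fintype.card_pos_iff.2 ⟨i⟩).ne')]

lemma sum_erase_ite_apply_eq_and_apply_eq {ξ : α → K} (hξ : ξ ∈ completeRandomization α n)
    (i : α) (k l : K) :
    ∑ j ∈ univ.erase i, (if ξ i = k ∧ ξ j = l then (1 : ℝ) else 0)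
      = if ξ i = k then (n l : ℝ) - (if k = l then 1 else 0) else 0 := by
  by_cases hi : ξ i = k
  · simp only [hi, true_and, if_true]
    rw [sum_erase_eq_sub (mem_univ i), sum_boole, card_fiber_of_mem hξ, hi]
  · simp [hi]

lemma expect_ite_apply_eq_and_apply_eq (hS : (completeRandomization α n).Nonempty) {i j : α}
    (hij : i ≠ j) (k l : K) :
    𝔼 ξ ∈ completeRandomization α n, (if ξ i = k ∧ ξ j = l then (1 : ℝ) else 0)
      = n k * ((n l : ℝ) - if k = l then 1 else 0) / (Fintype.card α * (Fintype.card α - 1)) := by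
  have hconst : ∀ j' ∈ univ.erase i,
      𝔼 ξ ∈ completeRandomization α n, (if ξ i = k ∧ ξ j' = l then (1 : ℝ) else 0)
        = 𝔼 ξ ∈ completeRandomization α n, (if ξ i = k ∧ ξ j = l then (1 : ℝ) else 0) := by
    intro j' hj'
    have hij' : i ≠ j' := (ne_of_mem_erase hj').symm
    simpa [Equiv.swap_apply_of_ne_of_ne hij hij'] using expect_comp_perm (n := n)
      (fun ξ => if ξ i = k ∧ ξ j = l then (1 : ℝ) else 0) (Equiv.swap j j')
  have hsum : ∑ j' ∈ univ.erase i,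
      𝔼 ξ ∈ completeRandomization α n, (if ξ i = k ∧ ξ j' = l then (1 : ℝ) else 0)
        = ((n l : ℝ) - if k = l then 1 else 0) * (n k / Fintype.card α) := by
    rw [← expect_sum_comm, expect_congr rfl fun ξ hξ =>
      sum_erase_ite_apply_eq_and_apply_eq hξ i k l, ← expect_ite_apply_eq hS i k, mul_expect]
    exact expect_congr rfl fun ξ _ => by split_ifs <;> simp
  have : Nontrivial α := ⟨⟨i, j, hij⟩⟩
  have hN : (1 : ℝ) < Fintype.card α := by exact_mod_cast Fintype.one_lt_card
  rw [sum_congr rfl hconst, sum_const, card_erase_of_mem (mem_univ i), card_univ, nsmul_eq_mul,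
    Nat.cast_pred Fintype.card_pos] at hsum
  rw [eq_div_iff (by nlinarith)]
  field_simp at hsum
  linear_combination hsum

lemma expect_sum_fiber (hS : (completeRandomization α n).Nonempty) (k : K) (g : α → ℝ) :
    𝔼 ξ ∈ completeRandomization α n, ∑ i ∈ {i | ξ i = k}, g i
      = n k / Fintype.card α * ∑ i, g i := by
  have hξ (ξ : α → K) : ∑ i ∈ {i | ξ i = k}, g i = ∑ i, g i * (if ξ i = k then 1 else 0) := by
    simp_rw [sum_filter, mul_boole]
  simp_rw [hξ, expect_sum_comm, ← mul_expect, expect_ite_apply_eq hS, mul_sum, mul_comm]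

lemma expect_ite_apply_eq_and_apply_eq_self (hS : (completeRandomization α n).Nonempty) (i : α)
    (k l : K) :
    𝔼 ξ ∈ completeRandomization α n, (if ξ i = k ∧ ξ i = l then (1 : ℝ) else 0)
      = if k = l then (n k : ℝ) / Fintype.card α else 0 := by
  split_ifs with hkl
  · subst hkl
    simpa using expect_ite_apply_eq hS i k
  · exact expect_eq_zero fun ξ _ => if_neg fun h => hkl (h.1.symm.trans h.2)

lemma expect_sum_fiber_mul_sum_fiber (hS : (completeRandomization α n).Nonempty) (k l : K)
    (g h : α → ℝ) :
    𝔼 ξ ∈ completeRandomization α n, (∑ i ∈ {i | ξ i = k}, g i) * ∑ j ∈ {j | ξ j = l}, h j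
      = (if k = l then (n k : ℝ) / Fintype.card α else 0) * ∑ i, g i * h i
        + n k * ((n l : ℝ) - if k = l then 1 else 0) / (Fintype.card α * (Fintype.card α - 1))
          * ((∑ i, g i) * (∑ j, h j) - ∑ i, g i * h i) := by
  have hprod (ξ : α → K) : (∑ i ∈ {i | ξ i = k}, g i) * (∑ j ∈ {j | ξ j = l}, h j)
      = ∑ i, ∑ j, g i * h j * (if ξ i = k ∧ ξ j = l then 1 else 0) := by
    rw [sum_filter, sum_filter, sum_mul_sum]
    exact sum_congr rfl fun i _ => sum_congr rfl fun j _ => by split_ifs <;> simp_all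
  have hrow (i : α) : ∑ j, g i * h j *
        𝔼 ξ ∈ completeRandomization α n, (if ξ i = k ∧ ξ j = l then (1 : ℝ) else 0)
      = (if k = l then (n k : ℝ) / Fintype.card α else 0) * (g i * h i)
        + n k * ((n l : ℝ) - if k = l then 1 else 0) / (Fintype.card α * (Fintype.card α - 1))
          * (g i * ((∑ j, h j) - h i)) := by
    rw [← add_sum_erase _ _ (mem_univ i), expect_ite_apply_eq_and_apply_eq_self hS,
      sum_congr rfl fun j hj => by
        rw [expect_ite_apply_eq_and_apply_eq hS (ne_of_mem_erase hj).symm],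
      ← sum_mul, ← mul_sum, sum_erase_eq_sub (mem_univ i)]
    ring
  simp_rw [hprod, expect_sum_comm, ← mul_expect, hrow]
  rw [sum_add_distrib, ← mul_sum, ← mul_sum]
  simp only [mul_sub, sum_sub_distrib, sum_mul]

lemma uniformCov_sum_fiber (hα : 1 < Fintype.card α) (hS : (completeRandomization α n).Nonempty)
    (k l : K) (g h : α → ℝ) :
    uniformCov (completeRandomization α n) (fun ξ => ∑ i ∈ {i | ξ i = k}, g i)
        (fun ξ => ∑ j ∈ {j | ξ j = l}, h j)
      = n k * ((if k = l then (Fintype.card α : ℝ) else 0) - n l) / (Fintype.card α - 1)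
          * uniformCov univ g h := by
  have hN : (1 : ℝ) < Fintype.card α := by exact_mod_cast hα
  rw [uniformCov, expect_sum_fiber_mul_sum_fiber hS, expect_sum_fiber hS, expect_sum_fiber hS,
    uniformCov, Fintype.expect_eq_sum_div_card, Fintype.expect_eq_sum_div_card,
    Fintype.expect_eq_sum_div_card]
  have : (Fintype.card α : ℝ) - 1 ≠ 0 := by linarith
  split_ifs <;> field_simp <;> ring

lemma expect_sampleVariance_fiber (hα : 1 < Fintype.card α)
    (hS : (completeRandomization α n).Nonempty) {k : K} (hk : 2 ≤ n k) (g : α → ℝ) :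
    𝔼 ξ ∈ completeRandomization α n, sampleVariance {i | ξ i = k} g = sampleVariance univ g := by
  have hN : (1 : ℝ) < Fintype.card α := by exact_mod_cast hα
  have hk' : (2 : ℝ) ≤ n k := by exact_mod_cast hk
  have hk1 : (n k : ℝ) - 1 ≠ 0 := by linarith
  have hN1 : (Fintype.card α : ℝ) - 1 ≠ 0 := by linarith
  have hξ : ∀ ξ ∈ completeRandomization α n, sampleVariance {i | ξ i = k} g
      = ((∑ i ∈ {i | ξ i = k}, g i * g i)
          - (∑ i ∈ {i | ξ i = k}, g i) * (∑ i ∈ {i | ξ i = k}, g i) / n k) / (n k - 1) := by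
    intro ξ hξ
    rw [sampleVariance_eq_mul_uniformCov, uniformCov, expect_eq_sum_div_card,
      expect_eq_sum_div_card, card_fiber_of_mem hξ]
    field_simp
  rw [expect_congr rfl hξ, ← expect_div, expect_sub_distrib, ← expect_div,
    expect_sum_fiber hS, expect_sum_fiber_mul_sum_fiber hS, sampleVariance_eq_mul_uniformCov,
    uniformCov, Fintype.expect_eq_sum_div_card, Fintype.expect_eq_sum_div_card, card_univ]
  simp only [if_true]
  field_simp
  ring

noncomputable def contrastEstimate (n : K → ℕ) (c : K → ℝ) (Y : α → K → ℝ) (ξ : α → K) : ℝ :=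
  ∑ k, c k / n k * ∑ i ∈ {i | ξ i = k}, Y i k

noncomputable def neymanVarianceEstimate (n : K → ℕ) (c : K → ℝ) (Y : α → K → ℝ) (ξ : α → K) :
    ℝ :=
  ∑ k, c k ^ 2 * sampleVariance {i | ξ i = k} (Y · k) / n k

lemma variance_contrastEstimate (hα : 1 < Fintype.card α)
    (hS : (completeRandomization α n).Nonempty) (hn : ∀ k, n k ≠ 0) (c : K → ℝ)
    (Y : α → K → ℝ) :
    𝔼 ξ ∈ completeRandomization α n,
        (contrastEstimate n c Y ξ - 𝔼 ζ ∈ completeRandomization α n, contrastEstimate n c Y ζ) ^ 2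
      = ∑ k, c k ^ 2 * sampleVariance univ (Y · k) / n k
        - sampleVariance univ (fun i => ∑ k, c k * Y i k) / Fintype.card α := by
  have hN : (1 : ℝ) < Fintype.card α := by exact_mod_cast hα
  have hN1 : (Fintype.card α : ℝ) - 1 ≠ 0 := by linarith
  have hterm (k l : K) : c k / n k * (c l / n l) * (n k * ((if k = l then (Fintype.card α : ℝ)
        else 0) - n l) / (Fintype.card α - 1) * uniformCov univ (Y · k) (Y · l))
      = (if k = l then c k ^ 2 * sampleVariance univ (Y · k) / n k else 0)
        - c k * c l * uniformCov univ (Y · k) (Y · l) / (Fintype.card α - 1) := by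
    have hk : (n k : ℝ) ≠ 0 := by exact_mod_cast hn k
    have hl : (n l : ℝ) ≠ 0 := by exact_mod_cast hn l
    rw [sampleVariance_eq_mul_uniformCov, card_univ]
    split_ifs with hkl
    · subst hkl; field_simp
    · field_simp; ring
  rw [expect_sub_expect_sq hS]
  unfold contrastEstimate
  rw [uniformCov_sum_sum]
  simp_rw [uniformCov_sum_fiber hα hS, hterm, sum_sub_distrib, sum_ite_eq, if_pos (mem_univ _),
    ← sum_div]
  rw [sampleVariance_eq_mul_uniformCov, uniformCov_sum_sum, card_univ]
  field_simp

theorem expect_neymanVarianceEstimate_sub_variance (hα : 1 < Fintype.card α)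
    (hn : ∑ k, n k = Fintype.card α) (hn2 : ∀ k, 2 ≤ n k) (c : K → ℝ) (Y : α → K → ℝ) :
    𝔼 ξ ∈ completeRandomization α n, neymanVarianceEstimate n c Y ξ
        - 𝔼 ξ ∈ completeRandomization α n,
          (contrastEstimate n c Y ξ - 𝔼 ζ ∈ completeRandomization α n, contrastEstimate n c Y ζ) ^ 2
      = sampleVariance univ (fun i => ∑ k, c k * Y i k) / Fintype.card α := by
  have hS := completeRandomization_nonempty hn
  rw [variance_contrastEstimate hα hS (fun k => by have := hn2 k; omega)]
  simp_rw [neymanVarianceEstimate, expect_sum_comm, ← expect_div, ← mul_expect,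
    expect_sampleVariance_fiber hα hS (hn2 _)]
  ring

end CompletelyRandomizedDesign

open CompletelyRandomizedDesign

/-- Under the three-group completely randomized design, the expected value
of the Neyman-type variance estimator `V̂ = s1²/N1 + s2²/N2 + s3²/N3` exceeds the true
randomization variance of `τ̂` by exactly `S_τ²/N ≥ 0`, so the estimator is conservative. -/
theorem stmt4 (N N1 N2 N3 : ℕ) (hN : N1 + N2 + N3 = N)
    (h1 : 2 ≤ N1) (h2 : 2 ≤ N2) (h3 : 2 ≤ N3)
    (Y : Fin N → Fin 3 → ℝ)
    (S : Finset (Fin N → Fin 3))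
    (hS : S = univ.filter (fun ξ : Fin N → Fin 3 =>
      (univ.filter (fun i => ξ i = 0)).card = N1 ∧
      (univ.filter (fun i => ξ i = 1)).card = N2 ∧
      (univ.filter (fun i => ξ i = 2)).card = N3))
    (tauhat : (Fin N → Fin 3) → ℝ)
    (htauhat : ∀ ξ, tauhat ξ =
      (∑ i ∈ univ.filter (fun i => ξ i = 1), Y i 1) / (N2 : ℝ)
      - (∑ i ∈ univ.filter (fun i => ξ i = 0), Y i 0) / (N1 : ℝ)
      - (∑ i ∈ univ.filter (fun i => ξ i = 2), Y i 2) / (N3 : ℝ))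
    -- group-k sample mean and sample variance of the observed outcomes
    (ybar : (Fin N → Fin 3) → Fin 3 → ℝ)
    (hybar : ∀ ξ k, ybar ξ k =
      (∑ i ∈ univ.filter (fun i => ξ i = k), Y i k)
        / ((univ.filter (fun i => ξ i = k)).card : ℝ))
    (s2 : (Fin N → Fin 3) → Fin 3 → ℝ)
    (hs2 : ∀ ξ k, s2 ξ k =
      (∑ i ∈ univ.filter (fun i => ξ i = k), (Y i k - ybar ξ k) ^ 2)
        / (((univ.filter (fun i => ξ i = k)).card : ℝ) - 1))
    (Vhat : (Fin N → Fin 3) → ℝ)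
    (hVhat : ∀ ξ, Vhat ξ = s2 ξ 0 / (N1 : ℝ) + s2 ξ 1 / (N2 : ℝ) + s2 ξ 2 / (N3 : ℝ))
    (τ : ℝ) (hτ : τ = (∑ i, (Y i 1 - Y i 0 - Y i 2)) / (N : ℝ))
    (Sτ2 : ℝ)
    (hSτ2 : Sτ2 = (∑ i, (Y i 1 - Y i 0 - Y i 2 - τ) ^ 2) / ((N : ℝ) - 1))
    -- randomization variance of τ̂ (deviation from its randomization mean)
    (Vtauhat : ℝ)
    (hV : Vtauhat = (∑ ξ ∈ S, (tauhat ξ - (∑ ζ ∈ S, tauhat ζ) / (S.card : ℝ)) ^ 2)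
      / (S.card : ℝ)) :
    (∑ ξ ∈ S, Vhat ξ) / (S.card : ℝ) - Vtauhat = Sτ2 / (N : ℝ)
      ∧ 0 ≤ Sτ2 / (N : ℝ) := by
  set n : Fin 3 → ℕ := ![N1, N2, N3]
  set c : Fin 3 → ℝ := ![-1, 1, -1]
  have hSn : S = completeRandomization (Fin N) n := by
    rw [hS]; ext ξ; simp [completeRandomization, Fin.forall_fin_succ, n]
  have hτhat : tauhat = contrastEstimate n c Y := by
    funext ξ; simp [htauhat, contrastEstimate, Fin.sum_univ_three, n, c]; ring
  have hVhat' : Vhat = neymanVarianceEstimate n c Y := by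
    funext ξ
    have hs2' (k : Fin 3) : s2 ξ k = sampleVariance {i | ξ i = k} (Y · k) := by
      rw [hs2, hybar]; rfl
    simp [hVhat, hs2', neymanVarianceEstimate, Fin.sum_univ_three, n, c]
  have hcY : (fun i => ∑ k, c k * Y i k) = fun i => Y i 1 - Y i 0 - Y i 2 := by
    funext i; simp [Fin.sum_univ_three, c]; ring
  have hSτ2' : Sτ2 = sampleVariance univ (fun i => ∑ k, c k * Y i k) := by
    rw [hSτ2, hτ, hcY, sampleVariance, card_univ, Fintype.card_fin]
  have key := expect_neymanVarianceEstimate_sub_variance (n := n) (by simp; omega)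
    (by simp [n, Fin.sum_univ_three, hN]) (fun k => by fin_cases k <;> simpa [n]) c Y
  rw [Fintype.card_fin] at key
  simp only [hV, ← expect_eq_sum_div_card, hSn, hτhat, hVhat', hSτ2']
  exact ⟨key, div_nonneg (sampleVariance_nonneg _ _) (Nat.cast_nonneg _)⟩
end

section
/- In the three-group completely randomized design, the covariance between the group-1 sample mean ȳ_1 = (1/N1)Σ_{ξ_i=1}𝒴_i(1) and the group-2 sample mean ȳ_2 = (1/N2)Σ_{ξ_i=2}𝒴_i(2) equals −(1/N)·(1/(N−1))Σ_i(𝒴_i(1) − 𝒴̄(1))(𝒴_i(2) − 𝒴̄(2)), i.e., Cov(ȳ_1, ȳ_2) = −S_{12}/N where S_{12} is the finite-population covariance of the two potential outcomes. -/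
/-!
Centre the outcomes, `a i = 𝒴ᵢ(1) - 𝒴̄(1)` and `b i = 𝒴ᵢ(2) - 𝒴̄(2)`, so that `∑ a = ∑ b = 0` and
`ȳ₁ - 𝒴̄(1)`, `ȳ₂ - 𝒴̄(2)` are the group totals of `a` and `b` divided by `N₁`, `N₂`. The set of
assignments is invariant under permuting the units, so the number `c` of assignments putting
unit `i` in group 1 and unit `j` in group 2 does not depend on the pair `i ≠ j`; double counting
gives `c N (N - 1) = |S| N₁ N₂`. Summing the product of the two group totals over all assignments
therefore gives `c ∑_{i ≠ j} a i b j = c ((∑ a) (∑ b) - ∑ a i b i) = -c ∑ a i b i`.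
-/

open Finset

theorem Finset.sum_div_sub_eq_sum_sub_div {ι K : Type*} [Field K] {s : Finset ι} {n : ℕ}
    (hs : #s = n) (hn : (n : K) ≠ 0) (f : ι → K) (c : K) :
    (∑ i ∈ s, f i) / n - c = (∑ i ∈ s, (f i - c)) / n := by
  rw [sum_sub_distrib, sum_const, hs, nsmul_eq_mul, sub_div, mul_div_cancel_left₀ c hn]

theorem Finset.sum_sub_sum_div_eq_zero {ι K : Type*} [Field K] {s : Finset ι} {n : ℕ}
    (hs : #s = n) (hn : (n : K) ≠ 0) (f : ι → K) : ∑ i ∈ s, (f i - (∑ j ∈ s, f j) / n) = 0 := by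
  rw [sum_sub_distrib, sum_const, hs, nsmul_eq_mul, mul_div_cancel₀ _ hn, sub_self]

theorem Finset.sum_offDiag_mul {ι R : Type*} [DecidableEq ι] [CommRing R] (s : Finset ι)
    (x y : ι → R) :
    ∑ p ∈ s.offDiag, x p.1 * y p.2 = (∑ i ∈ s, x i) * (∑ i ∈ s, y i) - ∑ i ∈ s, x i * y i := by
  rw [sum_mul_sum, ← sum_product', ← diag_union_offDiag, sum_union (disjoint_diag_offDiag s),
    sum_diag]
  ring

theorem Equiv.Perm.exists_apply_eq_and_apply_eq {ι : Type*} [DecidableEq ι] {i j k l : ι}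
    (hij : i ≠ j) (hkl : k ≠ l) : ∃ σ : Equiv.Perm ι, σ i = k ∧ σ j = l := by
  have hj : Equiv.swap i k j ≠ k := fun h =>
    hij ((Equiv.swap i k).injective (h.trans (Equiv.swap_apply_left i k).symm)).symm
  exact ⟨(Equiv.swap i k).trans (Equiv.swap (Equiv.swap i k j) l),
    by simp [Equiv.swap_apply_of_ne_of_ne hj.symm hkl], by simp⟩

def IsPermInvariant {ι κ : Type*} (S : Finset (ι → κ)) : Prop :=
  ∀ σ : Equiv.Perm ι, ∀ ξ ∈ S, ξ ∘ σ ∈ S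

namespace IsPermInvariant

variable {ι κ : Type*} {S : Finset (ι → κ)}

theorem card_filter_comp (hS : IsPermInvariant S) (σ : Equiv.Perm ι) (p : (ι → κ) → Prop)
    [DecidablePred p] : #{ξ ∈ S | p (ξ ∘ σ)} = #{ξ ∈ S | p ξ} := by
  refine card_nbij' (· ∘ σ) (· ∘ σ.symm) (fun ξ hξ => ?_) (fun ξ hξ => ?_) (fun ξ _ => ?_)
    (fun ξ _ => ?_)
  · simp only [coe_filter, Set.mem_ofPred_eq] at hξ ⊢
    exact ⟨hS σ ξ hξ.1, hξ.2⟩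
  · simp only [coe_filter, Set.mem_ofPred_eq] at hξ ⊢
    exact ⟨hS σ.symm ξ hξ.1, by simpa [Function.comp_assoc] using hξ.2⟩
  · ext; simp
  · ext; simp

theorem card_filter_pair_eq [DecidableEq ι] [DecidableEq κ] (hS : IsPermInvariant S)
    (a b : κ) {i j k l : ι} (hij : i ≠ j) (hkl : k ≠ l) :
    #{ξ ∈ S | ξ i = a ∧ ξ j = b} = #{ξ ∈ S | ξ k = a ∧ ξ l = b} := by
  obtain ⟨σ, hi, hj⟩ := Equiv.Perm.exists_apply_eq_and_apply_eq hij hkl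
  rw [← hS.card_filter_comp σ]
  simp [hi, hj]

theorem sum_mul_sum_filter [Fintype ι] [DecidableEq ι] [DecidableEq κ] {R : Type*} [CommRing R]
    (hS : IsPermInvariant S) {a b : κ} (hab : a ≠ b) {i j : ι} (hij : i ≠ j) (x y : ι → R) :
    ∑ ξ ∈ S, (∑ k with ξ k = a, x k) * (∑ l with ξ l = b, y l)
      = #{ξ ∈ S | ξ i = a ∧ ξ j = b} * ((∑ k, x k) * (∑ l, y l) - ∑ k, x k * y k) := by
  have hprod : ∀ ξ : ι → κ, (∑ k with ξ k = a, x k) * (∑ l with ξ l = b, y l)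
      = ∑ p ∈ univ.offDiag, if ξ p.1 = a ∧ ξ p.2 = b then x p.1 * y p.2 else 0 := by
    intro ξ
    rw [sum_filter, sum_filter, sum_mul_sum, ← sum_product', ← diag_union_offDiag,
      sum_union (disjoint_diag_offDiag _), sum_diag]
    simp only [ite_zero_mul_ite_zero]
    rw [sum_eq_zero fun k _ => if_neg fun h => hab (h.1.symm.trans h.2), zero_add]
  calc ∑ ξ ∈ S, (∑ k with ξ k = a, x k) * (∑ l with ξ l = b, y l)
      = ∑ p ∈ univ.offDiag, (#{ξ ∈ S | ξ p.1 = a ∧ ξ p.2 = b} : R) * (x p.1 * y p.2) := by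
        simp only [hprod]
        rw [sum_comm]
        refine sum_congr rfl fun p _ => ?_
        rw [← sum_filter, sum_const, nsmul_eq_mul]
    _ = #{ξ ∈ S | ξ i = a ∧ ξ j = b} * ((∑ k, x k) * (∑ l, y l) - ∑ k, x k * y k) := by
        rw [← sum_offDiag_mul, mul_sum]
        refine sum_congr rfl fun p hp => ?_
        rw [hS.card_filter_pair_eq a b (mem_offDiag.mp hp).2.2 hij]

theorem sum_mul_sum_filter_of_sum_eq_zero [Fintype ι] [DecidableEq ι] [Nontrivial ι]
    [DecidableEq κ] {R : Type*} [CommRing R] (hS : IsPermInvariant S) {a b : κ} (hab : a ≠ b)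
    {na nb : ℕ} (ha : ∀ ξ ∈ S, #{k | ξ k = a} = na) (hb : ∀ ξ ∈ S, #{k | ξ k = b} = nb)
    {x y : ι → R} (hx : ∑ k, x k = 0) (hy : ∑ k, y k = 0) :
    (Fintype.card ι * (Fintype.card ι - 1) : R)
        * ∑ ξ ∈ S, (∑ k with ξ k = a, x k) * (∑ l with ξ l = b, y l)
      = -(#S * na * nb * ∑ k, x k * y k) := by
  obtain ⟨i, j, hij⟩ := exists_pair_ne ι
  have hcount := hS.sum_mul_sum_filter hab hij (fun _ => (1 : R)) (fun _ => 1)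
  simp only [sum_const, nsmul_eq_mul, mul_one, card_univ] at hcount
  rw [sum_congr rfl fun ξ hξ => by rw [ha ξ hξ, hb ξ hξ], sum_const, nsmul_eq_mul] at hcount
  rw [hS.sum_mul_sum_filter hab hij x y, hx, hy]
  linear_combination (∑ k, x k * y k) * hcount

end IsPermInvariant

section assignments

variable {ι κ : Type*} [Fintype ι] [DecidableEq ι] [Fintype κ] [DecidableEq κ]

/-- The support of the completely randomized design with group sizes `n`. -/
def assignmentsWithSizes (n : κ → ℕ) : Finset (ι → κ) :=
  {ξ | ∀ k, #{i | ξ i = k} = n k}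

variable {n : κ → ℕ}

theorem mem_assignmentsWithSizes {ξ : ι → κ} :
    ξ ∈ assignmentsWithSizes n ↔ ∀ k, #{i | ξ i = k} = n k := by
  simp [assignmentsWithSizes]

theorem isPermInvariant_assignmentsWithSizes (n : κ → ℕ) :
    IsPermInvariant (assignmentsWithSizes (ι := ι) n) := by
  intro σ ξ hξ
  rw [mem_assignmentsWithSizes] at hξ ⊢
  exact fun k => (card_equiv σ fun i => by simp).trans (hξ k)

theorem assignmentsWithSizes_nonempty (h : ∑ k, n k = Fintype.card ι) :
    (assignmentsWithSizes (ι := ι) n).Nonempty := by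
  obtain ⟨e⟩ : Nonempty (ι ≃ Σ k, Fin (n k)) := Fintype.card_eq.mp (by simp [h])
  refine ⟨fun i => (e i).1, mem_assignmentsWithSizes.mpr fun k => ?_⟩
  rw [← Fintype.card_subtype, Fintype.card_congr (e.subtypeEquiv (q := fun s => s.1 = k)
    fun _ => Iff.rfl), Fintype.card_congr (Equiv.sigmaSubtype k), Fintype.card_fin]

end assignments

theorem stmt16_general (N N1 N2 N3 : ℕ) (hN : N1 + N2 + N3 = N) (hN2 : 2 ≤ N)
    (h1 : 0 < N1) (h2 : 0 < N2)
    (Y : Fin N → Fin 3 → ℝ)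
    (S : Finset (Fin N → Fin 3))
    (hS : S = univ.filter (fun ξ : Fin N → Fin 3 =>
      (univ.filter (fun i => ξ i = 0)).card = N1 ∧
      (univ.filter (fun i => ξ i = 1)).card = N2 ∧
      (univ.filter (fun i => ξ i = 2)).card = N3))
    (ybar1 ybar2 : (Fin N → Fin 3) → ℝ)
    (hybar1 : ∀ ξ, ybar1 ξ = (∑ i ∈ univ.filter (fun i => ξ i = 0), Y i 0) / (N1 : ℝ))
    (hybar2 : ∀ ξ, ybar2 ξ = (∑ i ∈ univ.filter (fun i => ξ i = 1), Y i 1) / (N2 : ℝ))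
    (Ybar : Fin 3 → ℝ) (hYbar : ∀ k, Ybar k = (∑ i, Y i k) / (N : ℝ))
    (S12 : ℝ)
    (hS12 : S12 = (∑ i, (Y i 0 - Ybar 0) * (Y i 1 - Ybar 1)) / ((N : ℝ) - 1)) :
    (∑ ξ ∈ S, (ybar1 ξ - Ybar 0) * (ybar2 ξ - Ybar 1)) / (S.card : ℝ)
      = -S12 / (N : ℝ) := by
  have hS' : S = assignmentsWithSizes ![N1, N2, N3] := by
    rw [hS]; ext ξ; simp [assignmentsWithSizes, Fin.forall_fin_succ]
  have hsize₀ : ∀ ξ ∈ S, #{i | ξ i = 0} = N1 := fun ξ hξ =>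
    mem_assignmentsWithSizes.mp (hS' ▸ hξ) 0
  have hsize₁ : ∀ ξ ∈ S, #{i | ξ i = 1} = N2 := fun ξ hξ =>
    mem_assignmentsWithSizes.mp (hS' ▸ hξ) 1
  have hcentered : ∀ ξ ∈ S, (ybar1 ξ - Ybar 0) * (ybar2 ξ - Ybar 1)
      = (∑ k with ξ k = 0, (Y k 0 - Ybar 0)) * (∑ l with ξ l = 1, (Y l 1 - Ybar 1))
        / (N1 * N2) := fun ξ hξ => by
    rw [hybar1, hybar2, sum_div_sub_eq_sum_sub_div (hsize₀ ξ hξ) (by positivity),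
      sum_div_sub_eq_sum_sub_div (hsize₁ ξ hξ) (by positivity), div_mul_div_comm]
  have hdeviations : ∀ k, ∑ i, (Y i k - Ybar k) = 0 := fun k => by
    simp only [hYbar]
    exact sum_sub_sum_div_eq_zero (by simp) (by positivity) _
  have : Nontrivial (Fin N) := Fin.nontrivial_iff_two_le.mpr hN2
  have htotals := (hS' ▸ isPermInvariant_assignmentsWithSizes _).sum_mul_sum_filter_of_sum_eq_zero
    (by decide : (0 : Fin 3) ≠ 1) hsize₀ hsize₁ (hdeviations 0) (hdeviations 1)
  have hnonempty : S.Nonempty :=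
    hS' ▸ assignmentsWithSizes_nonempty (by simp [Fin.sum_univ_three, hN])
  have hS0 : (S.card : ℝ) ≠ 0 := by exact_mod_cast hnonempty.card_pos.ne'
  have hN1 : (N : ℝ) - 1 ≠ 0 := by
    have : (2 : ℝ) ≤ N := by exact_mod_cast hN2
    linarith
  rw [sum_congr rfl hcentered, ← sum_div, hS12]
  field_simp
  simp only [Fintype.card_fin] at htotals
  linear_combination htotals

/-- In the three-group completely randomized design, the covariance
between the group-1 and group-2 sample means equals `−S₁₂/N`, where `S₁₂` is the
finite-population covariance of the two potential outcomes. -/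
theorem stmt16 (N N1 N2 N3 : ℕ) (hN : N1 + N2 + N3 = N) (hN2 : 2 ≤ N)
    (h1 : 0 < N1) (h2 : 0 < N2) (h3 : 0 < N3)
    (Y : Fin N → Fin 3 → ℝ)
    (S : Finset (Fin N → Fin 3))
    (hS : S = univ.filter (fun ξ : Fin N → Fin 3 =>
      (univ.filter (fun i => ξ i = 0)).card = N1 ∧
      (univ.filter (fun i => ξ i = 1)).card = N2 ∧
      (univ.filter (fun i => ξ i = 2)).card = N3))
    (ybar1 ybar2 : (Fin N → Fin 3) → ℝ)
    (hybar1 : ∀ ξ, ybar1 ξ = (∑ i ∈ univ.filter (fun i => ξ i = 0), Y i 0) / (N1 : ℝ))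
    (hybar2 : ∀ ξ, ybar2 ξ = (∑ i ∈ univ.filter (fun i => ξ i = 1), Y i 1) / (N2 : ℝ))
    (Ybar : Fin 3 → ℝ) (hYbar : ∀ k, Ybar k = (∑ i, Y i k) / (N : ℝ))
    (S12 : ℝ)
    (hS12 : S12 = (∑ i, (Y i 0 - Ybar 0) * (Y i 1 - Ybar 1)) / ((N : ℝ) - 1)) :
    (∑ ξ ∈ S, (ybar1 ξ - Ybar 0) * (ybar2 ξ - Ybar 1)) / (S.card : ℝ)
      = -S12 / (N : ℝ) :=
  stmt16_general N N1 N2 N3 hN hN2 h1 h2 Y S hS ybar1 ybar2 hybar1 hybar2 Ybar hYbar S12 hS12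
end
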